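/- Every G-invariant element of R′ lies in the K-subalgebra of R′ generated by the images of the orbit polynomials \overline{x_a}, where a ranges over the atoms; that is, every element of R′ fixed by G is a K-coefficient polynomial in the orbit polynomials of monomials that begin with x_1 and have all their indeterminates to the first power. -/

import Mathlib

open Finset

/-- The `k`-th elementary polynomial `σ_k` in the noncommuting variables
`x_1, …, x_n` of the free algebra `K⟨x_1,…,x_n⟩`. -/
noncomputable def elemPoly (K : Type*) [Field K] (n k : ℕ) : FreeAlgebra K (Fin n) :=
  ∑ s ∈ Finset.univ.powersetCard k, ((s.sort (· ≤ ·)).map (FreeAlgebra.ι K)).prod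

/-- The relation on the free algebra identifying `x_i * σ_k` with `σ_k * x_i`
for `1 ≤ i, k ≤ n`; the quotient `R′ = P/I` by the two-sided ideal `I` generated
by the commutators `[x_i, σ_k]` is `RingQuot` of this relation. -/
noncomputable def commRel (K : Type*) [Field K] (n : ℕ) :
    FreeAlgebra K (Fin n) → FreeAlgebra K (Fin n) → Prop :=
  fun a b => ∃ (i : Fin n) (k : ℕ), 1 ≤ k ∧ k ≤ n ∧
    a = FreeAlgebra.ι K i * elemPoly K n k ∧ b = elemPoly K n k * FreeAlgebra.ι K i

/-- The quotient ring `R′ = P/I`. -/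
noncomputable abbrev Rquot (K : Type*) [Field K] (n : ℕ) := RingQuot (commRel K n)

/-- The quotient map `P → R′`. -/
noncomputable def mkR (K : Type*) [Field K] (n : ℕ) :
    FreeAlgebra K (Fin n) →ₐ[K] Rquot K n :=
  RingQuot.mkAlgHom K (commRel K n)

/-- The image in `R′` of the generator `x_i`. -/
noncomputable def XR (K : Type*) [Field K] (n : ℕ) (i : Fin n) : Rquot K n :=
  mkR K n (FreeAlgebra.ι K i)

/-- The generator of the group `G` of circular permutations, acting as the
`K`-algebra automorphism of the free algebra sending `x_i` to `x_{i+1}` (mod `n`). -/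
noncomputable def rotHom (K : Type*) [Field K] (n : ℕ) :
    FreeAlgebra K (Fin n) →ₐ[K] FreeAlgebra K (Fin n) :=
  FreeAlgebra.lift K fun i => FreeAlgebra.ι K (finRotate n i)

/-- The monomial `x_w = x_{i(1)} ⋯ x_{i(d)}` of a word `w`. -/
noncomputable def wordMonomial (K : Type*) [Field K] (n : ℕ) (w : List (Fin n)) :
    FreeAlgebra K (Fin n) :=
  (w.map (FreeAlgebra.ι K)).prod

/-- The orbit polynomial `\overline{x_w} = ∑_{g ∈ G} (x_w)^g` of a word `w`
(the group `G` of circular permutations has order `n`). -/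
noncomputable def orbitPoly (K : Type*) [Field K] (n : ℕ) (w : List (Fin n)) :
    FreeAlgebra K (Fin n) :=
  ∑ m ∈ Finset.range n, (⇑(rotHom K n))^[m] (wordMonomial K n w)


/-!
Averaging a representative of an invariant `p` over `G` gives `n • p`, and the average of a
monomial `x_w` is its orbit polynomial; as `n` is invertible in `K`, it suffices to show that the
image of every orbit polynomial lies in the subalgebra. In `R′` the element `σ_1 = \overline{x_1}`
is central and `x_a x_a = x_a σ_1 - ∑_{j ≠ a} x_a x_j`. Since the rotations of the alphabet
commute with this rewriting, the orbit polynomial of a word with two equal adjacent letters `a a`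
becomes `σ_1` times a shorter orbit polynomial, minus orbit polynomials of words of the same
length whose longest prefix without equal adjacent letters is longer. Words without equal
adjacent letters are atoms up to a rotation of the alphabet.
-/

section

variable {K : Type*} [Field K] {n : ℕ}

theorem wordMonomial_append (u v : List (Fin n)) :
    wordMonomial K n (u ++ v) = wordMonomial K n u * wordMonomial K n v := by
  simp [wordMonomial]

theorem rotHom_pow_wordMonomial (m : ℕ) (w : List (Fin n)) :
    (rotHom K n ^ m) (wordMonomial K n w) = wordMonomial K n (w.map ⇑(finRotate n ^ m)) := by
  induction m with
  | zero => simp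
  | succ m ih =>
    rw [pow_succ', AlgHom.mul_apply, ih, pow_succ', Equiv.Perm.coe_mul, ← List.map_map]
    simp [wordMonomial, map_list_prod, rotHom, Function.comp_def]

theorem orbitPoly_eq_sum_pow (w : List (Fin n)) :
    orbitPoly K n w = ∑ m ∈ range n, (rotHom K n ^ m) (wordMonomial K n w) := by
  simp [orbitPoly]

theorem orbitPoly_eq_sum_wordMonomial (w : List (Fin n)) :
    orbitPoly K n w = ∑ m ∈ range n, wordMonomial K n (w.map ⇑(finRotate n ^ m)) := by
  simp only [orbitPoly_eq_sum_pow, rotHom_pow_wordMonomial]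

open Fin.NatCast in
theorem finRotate_pow_apply [NeZero n] (k : ℕ) (i : Fin n) :
    (finRotate n ^ k) i = i + k := by
  induction k with
  | zero => simp
  | succ k ih =>
    rw [pow_succ', Equiv.Perm.mul_apply, ih, finRotate_apply]
    push_cast
    rw [add_assoc]

theorem finRotate_pow_self : finRotate n ^ n = 1 := by
  rcases n.eq_zero_or_pos with rfl | hn
  · exact Subsingleton.elim _ _
  · have : NeZero n := ⟨hn.ne'⟩
    ext i
    simp [finRotate_pow_apply]

theorem orbitPoly_map_finRotate (w : List (Fin n)) :
    orbitPoly K n (w.map (finRotate n)) = orbitPoly K n w := by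
  set f : ℕ → FreeAlgebra K (Fin n) := fun m => wordMonomial K n (w.map ⇑(finRotate n ^ m))
  have hshift :
      ∀ m, wordMonomial K n ((w.map (finRotate n)).map ⇑(finRotate n ^ m)) = f (m + 1) := by
    intro m
    simp [f, List.map_map, pow_succ]
  have hperiod : f n = f 0 := by simp [f, finRotate_pow_self]
  rw [orbitPoly_eq_sum_wordMonomial, orbitPoly_eq_sum_wordMonomial]
  simp only [hshift]
  have := sum_range_succ f n
  rw [sum_range_succ', hperiod] at this
  exact add_right_cancel this

theorem orbitPoly_map_finRotate_pow (k : ℕ) (w : List (Fin n)) :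
    orbitPoly K n (w.map ⇑(finRotate n ^ k)) = orbitPoly K n w := by
  induction k with
  | zero => simp
  | succ k ih => rw [pow_succ', Equiv.Perm.coe_mul, ← List.map_map, orbitPoly_map_finRotate, ih]

theorem elemPoly_one : elemPoly K n 1 = ∑ i : Fin n, FreeAlgebra.ι K i := by
  rw [elemPoly, powersetCard_one, sum_map]
  simp

open Fin.NatCast in
theorem elemPoly_one_eq_orbitPoly_singleton_zero [NeZero n] :
    elemPoly K n 1 = orbitPoly K n [0] := by
  simp [elemPoly_one, orbitPoly_eq_sum_wordMonomial, wordMonomial, finRotate_pow_apply,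
    ← Fin.sum_univ_eq_sum_range (fun m => FreeAlgebra.ι K (m : Fin n))]

theorem commute_mkR_elemPoly {k : ℕ} (hk : 1 ≤ k) (hkn : k ≤ n) (x : FreeAlgebra K (Fin n)) :
    Commute (mkR K n (elemPoly K n k)) (mkR K n x) := by
  induction x using FreeAlgebra.induction with
  | grade0 r => rw [AlgHom.commutes]; exact Algebra.commute_algebraMap_right r _
  | grade1 i =>
    have := RingQuot.mkAlgHom_rel K (show commRel K n _ _ from ⟨i, k, hk, hkn, rfl, rfl⟩)
    rw [map_mul, map_mul] at this
    exact this.symm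
  | mul a b ha hb => rw [map_mul]; exact ha.mul_right hb
  | add a b ha hb => rw [map_add]; exact ha.add_right hb

theorem wordMonomial_append_pair_self (u v : List (Fin n)) (a : Fin n) :
    wordMonomial K n (u ++ a :: a :: v) =
      wordMonomial K n (u ++ [a]) * elemPoly K n 1 * wordMonomial K n v
        - ∑ j ∈ univ.erase a, wordMonomial K n (u ++ a :: j :: v) := by
  rw [elemPoly_one, ← add_sum_erase _ _ (mem_univ a)]
  simp [wordMonomial, mul_sum, sum_mul, mul_assoc]

theorem mkR_wordMonomial_append_pair_self (u v : List (Fin n)) (a : Fin n) :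
    mkR K n (wordMonomial K n (u ++ a :: a :: v)) =
      mkR K n (elemPoly K n 1) * mkR K n (wordMonomial K n (u ++ a :: v))
        - ∑ j ∈ univ.erase a, mkR K n (wordMonomial K n (u ++ a :: j :: v)) := by
  have : NeZero n := a.neZero
  rw [wordMonomial_append_pair_self, map_sub, map_mul, map_mul,
    ← (commute_mkR_elemPoly le_rfl NeZero.one_le _).eq, mul_assoc, ← map_mul,
    ← wordMonomial_append, map_sum]
  simp

theorem mkR_orbitPoly_append_pair_self (u v : List (Fin n)) (a : Fin n) :
    mkR K n (orbitPoly K n (u ++ a :: a :: v)) =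
      mkR K n (elemPoly K n 1) * mkR K n (orbitPoly K n (u ++ a :: v))
        - ∑ j ∈ univ.erase a, mkR K n (orbitPoly K n (u ++ a :: j :: v)) := by
  have hrot : ∀ m ∈ range n,
      mkR K n (wordMonomial K n ((u ++ a :: a :: v).map ⇑(finRotate n ^ m))) =
        mkR K n (elemPoly K n 1) *
            mkR K n (wordMonomial K n ((u ++ a :: v).map ⇑(finRotate n ^ m)))
          - ∑ j ∈ univ.erase a,
              mkR K n (wordMonomial K n ((u ++ a :: j :: v).map ⇑(finRotate n ^ m))) := by
    intro m _
    simp only [List.map_append, List.map_cons, mkR_wordMonomial_append_pair_self]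
    congr 1
    exact sum_equiv (finRotate n ^ m).symm (by simp [Equiv.symm_apply_eq]) (by simp)
  simp only [orbitPoly_eq_sum_wordMonomial, map_sum]
  rw [sum_congr rfl hrot, sum_sub_distrib, ← mul_sum, sum_comm]

variable (K n) in
def atomOrbitPolys : Set (Rquot K n) :=
  {y | ∃ w : List (Fin n), (w.map Fin.val).head? = some 0 ∧ w.IsChain (· ≠ ·) ∧
    y = mkR K n (orbitPoly K n w)}

open Fin.NatCast in
theorem finRotate_pow_sub_val_apply_self (b : Fin n) :
    (finRotate n ^ (n - b.val)) b = ⟨0, b.pos⟩ := by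
  have : NeZero n := b.neZero
  rw [finRotate_pow_apply]
  ext
  simp [Fin.val_add]

theorem mkR_orbitPoly_mem_of_isChain {w : List (Fin n)} (hw : w.IsChain (· ≠ ·)) :
    mkR K n (orbitPoly K n w) ∈ Algebra.adjoin K (atomOrbitPolys K n) := by
  cases w with
  | nil =>
    have : orbitPoly K n [] = n := by simp [orbitPoly, wordMonomial]
    rw [this, map_natCast]
    exact natCast_mem _ n
  | cons b t =>
    rw [← orbitPoly_map_finRotate_pow (n - b.val)]
    refine Algebra.subset_adjoin ⟨_, ?_, ?_, rfl⟩
    · simp [finRotate_pow_sub_val_apply_self]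
    · exact (List.isChain_map _).2 (hw.imp fun x y hxy h => hxy ((finRotate n ^ _).injective h))

theorem mkR_elemPoly_one_mem [NeZero n] :
    mkR K n (elemPoly K n 1) ∈ Algebra.adjoin K (atomOrbitPolys K n) := by
  rw [elemPoly_one_eq_orbitPoly_singleton_zero]
  exact mkR_orbitPoly_mem_of_isChain (List.isChain_singleton _)

theorem mkR_orbitPoly_append_mem {ℓ : ℕ}
    (hshort : ∀ w : List (Fin n), w.length < ℓ →
      mkR K n (orbitPoly K n w) ∈ Algebra.adjoin K (atomOrbitPolys K n))
    (v : List (Fin n)) : ∀ c : List (Fin n), c.IsChain (· ≠ ·) → (c ++ v).length = ℓ →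
      mkR K n (orbitPoly K n (c ++ v)) ∈ Algebra.adjoin K (atomOrbitPolys K n) := by
  induction v with
  | nil => intro c hc _; simpa using mkR_orbitPoly_mem_of_isChain hc
  | cons b v ih =>
    intro c hc hlen
    by_cases hcb : (c ++ [b]).IsChain (· ≠ ·)
    · simpa using ih (c ++ [b]) hcb (by simpa using hlen)
    · obtain ⟨c', rfl⟩ : ∃ c', c = c' ++ [b] := by
        simp only [List.isChain_append, hc, List.isChain_singleton, List.head?_cons,
          Option.mem_def, Option.some.injEq, true_and, not_forall, not_not] at hcb
        obtain ⟨x, hx, _, rfl, rfl⟩ := hcb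
        exact ⟨c.dropLast, (List.dropLast_append_getLast? x hx).symm⟩
      have : NeZero n := b.neZero
      rw [List.append_assoc, List.singleton_append, mkR_orbitPoly_append_pair_self]
      refine sub_mem (mul_mem mkR_elemPoly_one_mem (hshort _ ?_)) (sum_mem fun j hj => ?_)
      · simp only [List.length_append, List.length_cons] at hlen ⊢
        omega
      · have hjb : j ≠ b := (mem_erase.1 hj).1
        have hchain : (c' ++ [b] ++ [j]).IsChain (· ≠ ·) :=
          hc.append (List.isChain_singleton j) (by simpa using hjb.symm)
        simpa using ih (c' ++ [b, j]) (by simpa using hchain) (by simp_all)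

theorem mkR_orbitPoly_mem (w : List (Fin n)) :
    mkR K n (orbitPoly K n w) ∈ Algebra.adjoin K (atomOrbitPolys K n) := by
  obtain ⟨ℓ, hℓ⟩ : ∃ ℓ, w.length = ℓ := ⟨_, rfl⟩
  induction ℓ using Nat.strong_induction_on generalizing w with
  | _ ℓ ih => exact mkR_orbitPoly_append_mem (fun w' hw' => ih _ hw' w' rfl) w [] .nil hℓ

theorem span_range_wordMonomial : Submodule.span K (Set.range (wordMonomial K n)) = ⊤ := by
  refine eq_top_iff.2 fun x _ => ?_
  have hx : x ∈ Subalgebra.toSubmodule (Algebra.adjoin K (Set.range (FreeAlgebra.ι K))) := by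
    rw [FreeAlgebra.adjoin_range_ι]
    trivial
  rw [Algebra.adjoin_eq_span] at hx
  refine Submodule.span_mono (fun y hy => ?_) hx
  induction hy using Submonoid.closure_induction with
  | mem y hy => obtain ⟨i, rfl⟩ := hy; exact ⟨[i], by simp [wordMonomial]⟩
  | one => exact ⟨[], rfl⟩
  | mul y z _ _ hy hz =>
    obtain ⟨u, rfl⟩ := hy
    obtain ⟨v, rfl⟩ := hz
    exact ⟨u ++ v, wordMonomial_append u v⟩

theorem mkR_sum_rotHom_pow_mem (x : FreeAlgebra K (Fin n)) :
    mkR K n (∑ m ∈ range n, (rotHom K n ^ m) x) ∈ Algebra.adjoin K (atomOrbitPolys K n) := by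
  have hx : x ∈ Submodule.span K (Set.range (wordMonomial K n)) := by
    rw [span_range_wordMonomial]; trivial
  induction hx using Submodule.span_induction with
  | mem y hy =>
    obtain ⟨w, rfl⟩ := hy
    rw [← orbitPoly_eq_sum_pow]
    exact mkR_orbitPoly_mem w
  | zero => simp
  | add y z _ _ hy hz => simpa [sum_add_distrib] using add_mem hy hz
  | smul c y _ hy => simpa [← smul_sum] using Subalgebra.smul_mem _ hy c

end

/-- Every `G`-invariant element of `R′` — an element `p` such that for every
representative `q ∈ P` of `p` and every `g ∈ G` the class of `q^g` is again `p` —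
lies in the `K`-subalgebra of `R′` generated by the images of the orbit
polynomials of the atoms (monomials beginning with `x_1` with all
indeterminates to the first power). -/
theorem invariant_mem_adjoin_atom_orbitPolys
    (K : Type*) [Field K] [CharZero K] (n : ℕ) (hn : 3 ≤ n)
    (p : Rquot K n)
    (hp : ∀ (m : ℕ) (q : FreeAlgebra K (Fin n)),
      mkR K n q = p → mkR K n ((⇑(rotHom K n))^[m] q) = p) :
    p ∈ Algebra.adjoin K
      {y : Rquot K n | ∃ w : List (Fin n),
        (w.map Fin.val).head? = some 0 ∧ w.Chain' (· ≠ ·) ∧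
        y = mkR K n (orbitPoly K n w)} := by
  obtain ⟨q, hq⟩ := RingQuot.mkAlgHom_surjective K (commRel K n) p
  have hsum : mkR K n (∑ m ∈ range n, (rotHom K n ^ m) q) = (n : K) • p := by
    simp only [map_sum, AlgHom.coe_pow]
    rw [sum_congr rfl fun m _ => hp m q hq, sum_const, card_range, Nat.cast_smul_eq_nsmul]
  have hmem := Subalgebra.smul_mem _ (mkR_sum_rotHom_pow_mem q) (n : K)⁻¹
  rwa [hsum, smul_smul, inv_mul_cancel₀ (Nat.cast_ne_zero.2 (by omega)), one_smul] at hmem
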